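/- arXiv:2205.05179 — 2 statements merged into one kernel-verified Lean document; each statement's English description precedes it below -/
import Mathlib

section
/- Every compact subspace K of ℝ^n has topological dimension at most n: every open cover of K (in the subspace topology) possesses an open refinement of order at most n. -/
/-!
Scaled copies of the open vertex stars of the Freudenthal–Kuhn triangulation of `ℝⁿ` are open
covers of arbitrarily small mesh in which no point lies in more than `n + 1` members: the stars
containing `x` are determined by the sets of coordinates in which `x` lies above their vertex,
and these sets form a chain of subsets of `Fin n`. Restricting to `K` such a cover of mesh below
a Lebesgue number of a given open cover of `K` gives the required refinement.
-/

/-- A family `𝒜` of subsets of `X` has order at most `m`: no point of `X` lies in more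
than `m + 1` distinct elements of `𝒜`. -/
def OrderAtMost {X : Type*} (𝒜 : Set (Set X)) (m : ℕ) : Prop :=
  ∀ (x : X) (𝒮 : Finset (Set X)), (∀ A ∈ 𝒮, A ∈ 𝒜 ∧ x ∈ A) → 𝒮.card ≤ m + 1

/-- The topological (covering) dimension of `X` is at most `m`: every open cover of `X`
possesses an open refinement (an open cover each of whose members is contained in some
member of the original cover) of order at most `m`. -/
def TopDimLE (X : Type*) [TopologicalSpace X] (m : ℕ) : Prop :=
  ∀ 𝒰 : Set (Set X), (∀ U ∈ 𝒰, IsOpen U) → ⋃₀ 𝒰 = Set.univ →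
    ∃ 𝒱 : Set (Set X), (∀ V ∈ 𝒱, IsOpen V) ∧ ⋃₀ 𝒱 = Set.univ ∧
      (∀ V ∈ 𝒱, ∃ U ∈ 𝒰, V ⊆ U) ∧ OrderAtMost 𝒱 m

open Set Finset

section Order

variable {X : Type*} {m : ℕ}

theorem OrderAtMost.mono {𝒜 ℬ : Set (Set X)} (h : OrderAtMost ℬ m) (h𝒜ℬ : 𝒜 ⊆ ℬ) :
    OrderAtMost 𝒜 m :=
  fun x 𝒮 h𝒮 => h x 𝒮 fun A hA => ⟨h𝒜ℬ (h𝒮 A hA).1, (h𝒮 A hA).2⟩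

theorem orderAtMost_range {ι : Type*} {F : ι → Set X}
    (h : ∀ (x : X) (S : Finset ι), (∀ i ∈ S, x ∈ F i) → #S ≤ m + 1) :
    OrderAtMost (range F) m := by
  classical
  intro x 𝒮 h𝒮
  choose idx hidx using fun A : 𝒮 => (h𝒮 A A.2).1
  have hinj : Function.Injective idx := fun A B hAB =>
    Subtype.ext (by rw [← hidx A, ← hidx B, hAB])
  calc #𝒮 = #(univ.image idx) := by
        rw [card_image_of_injective _ hinj, card_univ, Fintype.card_coe]
    _ ≤ m + 1 := h x _ <| by
      simp only [Finset.mem_image, Finset.mem_univ, true_and, forall_exists_index,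
        forall_apply_eq_imp_iff]
      exact fun A => (hidx A).symm ▸ (h𝒮 A A.2).2

theorem OrderAtMost.preimage {Y : Type*} {𝒞 : Set (Set X)} (h : OrderAtMost 𝒞 m)
    (f : Y → X) : OrderAtMost (preimage f '' 𝒞) m := by
  rw [image_eq_range]
  refine orderAtMost_range fun y S hS => ?_
  rw [← card_map (Function.Embedding.subtype _)]
  exact h (f y) _ fun C hC => by
    obtain ⟨C, hCS, rfl⟩ := Finset.mem_map.mp hC
    exact ⟨C.2, hS C hCS⟩

end Order

def HasFineCovers (X : Type*) [PseudoMetricSpace X] (m : ℕ) : Prop :=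
  ∀ δ > 0, ∃ 𝒞 : Set (Set X), (∀ C ∈ 𝒞, IsOpen C) ∧ ⋃₀ 𝒞 = univ ∧
    (∀ C ∈ 𝒞, ∀ x ∈ C, ∀ y ∈ C, dist x y < δ) ∧ OrderAtMost 𝒞 m

namespace HasFineCovers

variable {X : Type*} [PseudoMetricSpace X] {m : ℕ}

theorem subtype (h : HasFineCovers X m) (s : Set X) : HasFineCovers s m := by
  intro δ hδ
  obtain ⟨𝒞, hopen, hcov, hsmall, horder⟩ := h δ hδ
  refine ⟨preimage Subtype.val '' 𝒞, ?_, ?_, ?_, horder.preimage _⟩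
  · rintro _ ⟨C, hC, rfl⟩
    exact (hopen C hC).preimage continuous_subtype_val
  · rw [sUnion_image, ← preimage_iUnion₂, ← sUnion_eq_biUnion, hcov, preimage_univ]
  · rintro _ ⟨C, hC, rfl⟩ x hx y hy
    exact hsmall C hC x hx y hy

theorem topDimLE [CompactSpace X] (h : HasFineCovers X m) : TopDimLE X m := by
  intro 𝒰 hopen hcov
  obtain ⟨δ, hδ, hleb⟩ :=
    lebesgue_number_lemma_of_metric_sUnion isCompact_univ hopen hcov.symm.subset
  obtain ⟨𝒞, hCopen, hCcov, hsmall, horder⟩ := h δ hδ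
  refine ⟨𝒞 \ {∅}, fun C hC => hCopen C hC.1, ?_, ?_, horder.mono sdiff_subset⟩
  · rw [sUnion_sdiff_singleton_empty, hCcov]
  · rintro C ⟨hC, hCne⟩
    obtain ⟨x, hx⟩ := nonempty_iff_ne_empty.mpr hCne
    obtain ⟨U, hU, hxU⟩ := hleb x (mem_univ x)
    exact ⟨U, hU, fun y hy => hxU (Metric.mem_ball.mpr (hsmall C hC y hy x hx))⟩

end HasFineCovers

theorem Finset.card_le_of_isChain {α : Type*} [Fintype α] {𝒮 : Finset (Finset α)}
    (h : IsChain (· ⊆ ·) (𝒮 : Set (Finset α))) : #𝒮 ≤ Fintype.card α + 1 := by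
  have hinj : Set.InjOn card (𝒮 : Set (Finset α)) := fun s hs t ht hst => by
    rcases eq_or_ne s t with rfl | hne
    · rfl
    rcases h hs ht hne with hst' | hts
    · exact eq_of_subset_of_card_le hst' hst.ge
    · exact (eq_of_subset_of_card_le hts hst.le).symm
  calc #𝒮 = #(𝒮.image card) := (card_image_of_injOn hinj).symm
    _ ≤ #(range (Fintype.card α + 1)) := card_le_card fun k hk => by
      obtain ⟨s, -, rfl⟩ := Finset.mem_image.mp hk
      exact Finset.mem_range_succ_iff.mpr (card_le_univ s)
    _ = Fintype.card α + 1 := card_range _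

/-- The open star of the vertex `v` in the Freudenthal–Kuhn triangulation of `ℝⁿ`. -/
def kuhnStar {n : ℕ} (v : Fin n → ℤ) : Set (Fin n → ℝ) :=
  {x | (∀ i, |x i - v i| < 1) ∧ ∀ i j, (x i - v i) - (x j - v j) < 1}

noncomputable def coordsAbove {n : ℕ} (x : Fin n → ℝ) (v : Fin n → ℤ) : Finset (Fin n) :=
  univ.filter fun i => (v i : ℝ) ≤ x i

section KuhnStar

variable {n : ℕ} {x y : Fin n → ℝ} {v w : Fin n → ℤ}

theorem isOpen_kuhnStar (v : Fin n → ℤ) : IsOpen (kuhnStar v) := by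
  have hcoord : ∀ i, Continuous fun x : Fin n → ℝ => x i - v i := fun i => by fun_prop
  simp only [kuhnStar, ofPred_and, ofPred_forall]
  exact (isOpen_iInter_of_finite fun i => isOpen_lt (hcoord i).abs continuous_const).inter
    (isOpen_iInter_of_finite fun i => isOpen_iInter_of_finite fun j =>
      isOpen_lt ((hcoord i).sub (hcoord j)) continuous_const)

theorem mem_kuhnStar_ceil (x : Fin n → ℝ) : x ∈ kuhnStar fun i => ⌈x i⌉ := by
  have hceil : ∀ i, x i ≤ ⌈x i⌉ ∧ (⌈x i⌉ : ℝ) < x i + 1 := fun i =>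
    ⟨Int.le_ceil _, Int.ceil_lt_add_one _⟩
  exact ⟨fun i => abs_lt.mpr ⟨by linarith [hceil i], by linarith [hceil i]⟩,
    fun i j => by linarith [hceil i, hceil j]⟩

theorem dist_lt_two_of_mem_kuhnStar (hx : x ∈ kuhnStar v) (hy : y ∈ kuhnStar v) :
    dist x y < 2 :=
  (dist_pi_lt_iff two_pos).mpr fun i =>
    calc dist (x i) (y i) ≤ |x i - v i| + |y i - v i| := by
          rw [Real.dist_eq, abs_sub_comm (y i)]; exact abs_sub_le _ _ _
      _ < 1 + 1 := add_lt_add (hx.1 i) (hy.1 i)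
      _ = 2 := one_add_one_eq_two

theorem coordsAbove_subset_or_subset (hv : x ∈ kuhnStar v) (hw : x ∈ kuhnStar w) :
    coordsAbove x v ⊆ coordsAbove x w ∨ coordsAbove x w ⊆ coordsAbove x v := by
  by_contra! hne
  obtain ⟨i, hiv, hiw⟩ := Finset.not_subset.mp hne.1
  obtain ⟨j, hjw, hjv⟩ := Finset.not_subset.mp hne.2
  simp only [coordsAbove, Finset.mem_filter, Finset.mem_univ, true_and, not_le]
    at hiv hiw hjw hjv
  have hi : (v i : ℝ) + 1 ≤ w i := by
    exact_mod_cast Int.add_one_le_of_lt (by exact_mod_cast hiv.trans_lt hiw)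
  have hj : (w j : ℝ) + 1 ≤ v j := by
    exact_mod_cast Int.add_one_le_of_lt (by exact_mod_cast hjw.trans_lt hjv)
  linarith [hv.2 i j, hw.2 j i]

theorem floor_eq_of_mem_coordsAbove (hx : x ∈ kuhnStar v) {i : Fin n}
    (hi : i ∈ coordsAbove x v) : ⌊x i⌋ = v i := by
  simp only [coordsAbove, Finset.mem_filter, Finset.mem_univ, true_and] at hi
  exact Int.floor_eq_iff.mpr ⟨hi, by linarith [(abs_lt.mp (hx.1 i)).2]⟩

theorem ceil_eq_of_notMem_coordsAbove (hx : x ∈ kuhnStar v) {i : Fin n}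
    (hi : i ∉ coordsAbove x v) : ⌈x i⌉ = v i := by
  simp only [coordsAbove, Finset.mem_filter, Finset.mem_univ, true_and, not_le] at hi
  exact Int.ceil_eq_iff.mpr ⟨by linarith [(abs_lt.mp (hx.1 i)).1], hi.le⟩

theorem eq_of_coordsAbove_eq (hv : x ∈ kuhnStar v) (hw : x ∈ kuhnStar w)
    (h : coordsAbove x v = coordsAbove x w) : v = w := by
  funext i
  by_cases hi : i ∈ coordsAbove x v
  · rw [← floor_eq_of_mem_coordsAbove hv hi, floor_eq_of_mem_coordsAbove hw (h ▸ hi)]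
  · rw [← ceil_eq_of_notMem_coordsAbove hv hi, ceil_eq_of_notMem_coordsAbove hw (h ▸ hi)]

theorem card_le_of_forall_mem_kuhnStar {S : Finset (Fin n → ℤ)}
    (hS : ∀ v ∈ S, x ∈ kuhnStar v) : #S ≤ n + 1 := by
  classical
  have hinj : Set.InjOn (coordsAbove x) S := fun v hv w hw =>
    eq_of_coordsAbove_eq (hS v hv) (hS w hw)
  have hchain : IsChain (· ⊆ ·) (S.image (coordsAbove x) : Set (Finset (Fin n))) := by
    simp only [coe_image]
    rintro _ ⟨v, hv, rfl⟩ _ ⟨w, hw, rfl⟩ -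
    exact coordsAbove_subset_or_subset (hS v hv) (hS w hw)
  calc #S = #(S.image (coordsAbove x)) := (card_image_of_injOn hinj).symm
    _ ≤ n + 1 := by simpa using card_le_of_isChain hchain

end KuhnStar

theorem hasFineCovers_pi (n : ℕ) : HasFineCovers (Fin n → ℝ) n := by
  intro δ hδ
  obtain ⟨c, hc, rfl⟩ : ∃ c > 0, δ = 2 * c := ⟨δ / 2, half_pos hδ, by ring⟩
  refine ⟨preimage (c⁻¹ • ·) '' range kuhnStar, ?_, ?_, ?_,
    (orderAtMost_range fun x S hS => card_le_of_forall_mem_kuhnStar hS).preimage _⟩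
  · rintro _ ⟨_, ⟨v, rfl⟩, rfl⟩
    exact (isOpen_kuhnStar v).preimage (continuous_const_smul _)
  · exact eq_univ_of_forall fun x => ⟨_, ⟨_, ⟨_, rfl⟩, rfl⟩, mem_kuhnStar_ceil (c⁻¹ • x)⟩
  · rintro _ ⟨_, ⟨v, rfl⟩, rfl⟩ x hx y hy
    have h := dist_lt_two_of_mem_kuhnStar hx hy
    rw [dist_smul₀, Real.norm_eq_abs, abs_inv, abs_of_pos hc, inv_mul_lt_iff₀ hc] at h
    linarith

/-- Every compact subspace of `ℝ^n` has topological dimension at most `n`. -/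
theorem statement3 (n : ℕ) (K : Set (Fin n → ℝ)) (hK : IsCompact K) :
    TopDimLE ↥K n := by
  have := isCompact_iff_compactSpace.mp hK
  exact ((hasFineCovers_pi n).subtype K).topDimLE
end

section
/- Let X be a topological space with X = ⋃_{i=0}^∞ C_i, where every C_i is closed, C₀ = ∅, C_i is contained in the interior of C_{i+1} for all i, and there exists d ∈ ℕ₀ such that the closure of C_{i+1} \ C_i has topological dimension at most d for all i. Then X is finite-dimensional and dim X ≤ d. -/
/-- `X` is finite-dimensional: some `m` bounds its topological dimension. -/
def FiniteDim (X : Type*) [TopologicalSpace X] : Prop := ∃ m, TopDimLE X m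

/-- The topological dimension of `X`: the least `m` such that every open cover of `X`
has an open refinement of order at most `m` (junk value `0` if no such `m` exists). -/
noncomputable def topDim (X : Type*) [TopologicalSpace X] : ℕ := sInf {m | TopDimLE X m}

open Set

universe u

def OrderLEOn {ι X : Type*} (W : ι → Set X) (S : Set X) (m : ℕ) : Prop :=
  ∀ x ∈ S, ∀ T : Finset ι, (∀ i ∈ T, x ∈ W i) → T.card ≤ m + 1

theorem exists_mem_succ_diff {X : Type*} {C : ℕ → Set X} (h0 : C 0 = ∅)
    (hcover : ⋃ i, C i = univ) (x : X) : ∃ k, x ∈ C (k + 1) \ C k := by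
  classical
  have hx : ∃ n, x ∈ C n := mem_iUnion.1 (hcover ▸ mem_univ x)
  obtain ⟨k, hk⟩ : ∃ k, Nat.find hx = k + 1 :=
    Nat.exists_eq_succ_of_ne_zero fun h => by simpa [h0, h] using Nat.find_spec hx
  exact ⟨k, hk ▸ Nat.find_spec hx, Nat.find_min hx (by omega)⟩

theorem orderAtMost_range_s8 {X ι : Type*} {W : ι → Set X} {m : ℕ} (hW : OrderLEOn W univ m) :
    OrderAtMost (range W) m := by
  classical
  intro x 𝒮 h𝒮
  obtain ⟨T, -, hinj, rfl⟩ := Finset.exists_subset_injOn_image_eq_of_surjOn univ 𝒮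
    fun A hA => by simpa using (h𝒮 A hA).1
  rw [Finset.card_image_of_injOn hinj]
  exact hW x trivial T fun i hi => (h𝒮 _ (Finset.mem_image_of_mem W hi)).2

variable {X : Type u} {ι : Type*} [TopologicalSpace X]

structure IsShrinking (W V : ι → Set X) : Prop where
  isOpen : ∀ i, IsOpen (W i)
  iUnion_eq : ⋃ i, W i = univ
  subset : ∀ i, W i ⊆ V i

theorem topDimLE_of_forall_exists_shrinking {m : ℕ}
    (h : ∀ (ι : Type u) (V : ι → Set X), (∀ i, IsOpen (V i)) → ⋃ i, V i = univ →
      ∃ W, IsShrinking W V ∧ OrderLEOn W univ m) :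
    TopDimLE X m := by
  intro 𝒰 h𝒰o h𝒰
  obtain ⟨W, hW, hord⟩ := h 𝒰 Subtype.val (fun U => h𝒰o U U.2) (by rwa [← sUnion_eq_iUnion])
  exact ⟨range W, forall_mem_range.2 hW.isOpen, by rw [sUnion_range, hW.iUnion_eq],
    forall_mem_range.2 fun U => ⟨U, U.2, hW.subset U⟩, orderAtMost_range_s8 hord⟩

theorem TopDimLE.exists_shrinking {m : ℕ} (h : TopDimLE X m) {V : ι → Set X}
    (hVo : ∀ i, IsOpen (V i)) (hV : ⋃ i, V i = univ) :
    ∃ W, IsShrinking W V ∧ OrderLEOn W univ m := by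
  classical
  obtain ⟨𝒱, h𝒱o, h𝒱, href, hord⟩ :=
    h (range V) (forall_mem_range.2 hVo) (by rwa [sUnion_range])
  have : ∀ G : 𝒱, ∃ i, (G : Set X) ⊆ V i := fun G => by
    obtain ⟨_, ⟨i, rfl⟩, hG⟩ := href G G.2
    exact ⟨i, hG⟩
  choose tag htag using this
  refine ⟨fun i => ⋃ (G : 𝒱) (_ : tag G = i), G, ⟨fun i => ?_, ?_, fun i => ?_⟩, ?_⟩
  · exact isOpen_iUnion fun G => isOpen_iUnion fun _ => h𝒱o G G.2
  · refine eq_univ_of_forall fun x => ?_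
    obtain ⟨G, hG, hxG⟩ := mem_sUnion.1 (h𝒱 ▸ mem_univ x)
    exact mem_iUnion.2 ⟨_, mem_iUnion₂.2 ⟨⟨G, hG⟩, rfl, hxG⟩⟩
  · exact iUnion₂_subset fun G hG => hG ▸ htag G
  · intro x _ T hT
    have hsurj : SurjOn tag {G | x ∈ (G : Set X)} T := fun i hi => by
      obtain ⟨G, hG, hxG⟩ := mem_iUnion₂.1 (hT i hi)
      exact ⟨G, hxG, hG⟩
    obtain ⟨u, hux, hinj, rfl⟩ := Finset.exists_subset_injOn_image_eq_of_surjOn _ T hsurj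
    rw [Finset.card_image_of_injOn hinj, ← Finset.card_map (Function.Embedding.subtype _)]
    refine hord x _ fun G hG => ?_
    obtain ⟨G, hGu, rfl⟩ := Finset.mem_map.1 hG
    exact ⟨G.2, hux hGu⟩

theorem exists_shrinking_of_isClosed {F : Set X} {m : ℕ} (hF : IsClosed F)
    (hFd : TopDimLE F m) {V : ι → Set X} (hVo : ∀ i, IsOpen (V i)) (hV : ⋃ i, V i = univ) :
    ∃ W, IsShrinking W V ∧ (∀ i, V i \ F ⊆ W i) ∧ OrderLEOn W F m := by
  obtain ⟨W', hW', hord⟩ := hFd.exists_shrinking (V := fun i => (↑) ⁻¹' V i)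
    (fun i => (hVo i).preimage continuous_subtype_val) (by simp [← preimage_iUnion, hV])
  choose O hOo hO using fun i => isOpen_induced_iff.1 (hW'.isOpen i)
  let W i := V i ∩ (O i ∪ Fᶜ)
  have hmem : ∀ i, ∀ x (hx : x ∈ F), x ∈ W i ↔ (⟨x, hx⟩ : F) ∈ W' i := fun i x hx => by
    rw [← hO i]
    exact ⟨fun h => h.2.resolve_right (not_not_intro hx),
      fun h => ⟨hW'.subset i (hO i ▸ h), Or.inl h⟩⟩
  refine ⟨W, ⟨fun i => (hVo i).inter ((hOo i).union hF.isOpen_compl), ?_,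
    fun i => inter_subset_left⟩, fun i x hx => ⟨hx.1, Or.inr hx.2⟩,
    fun x hx T hT => hord ⟨x, hx⟩ trivial T fun i hi => (hmem i x hx).1 (hT i hi)⟩
  refine eq_univ_of_forall fun x => mem_iUnion.2 ?_
  by_cases hx : x ∈ F
  · obtain ⟨i, hi⟩ := mem_iUnion.1 (hW'.iUnion_eq ▸ mem_univ (⟨x, hx⟩ : F))
    exact ⟨i, (hmem i x hx).2 hi⟩
  · obtain ⟨i, hi⟩ := mem_iUnion.1 (hV ▸ mem_univ x)
    exact ⟨i, hi, Or.inr hx⟩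

theorem exists_shrinking_seq {A : ℕ → Set X} {m : ℕ} (hA : ∀ n, IsClosed (A n))
    (hAd : ∀ n, TopDimLE (A n) m) {V : ι → Set X} (hVo : ∀ i, IsOpen (V i))
    (hV : ⋃ i, V i = univ) :
    ∃ f : ℕ → ι → Set X, f 0 = V ∧ ∀ n, IsShrinking (f (n + 1)) (f n) ∧
      (∀ i, f n i \ A n ⊆ f (n + 1) i) ∧ OrderLEOn (f (n + 1)) (A n) m := by
  choose! step hstep using fun n (U : ι → Set X) (hU : (∀ i, IsOpen (U i)) ∧ ⋃ i, U i = univ) =>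
    exists_shrinking_of_isClosed (hA n) (hAd n) hU.1 hU.2
  let f : ℕ → ι → Set X := fun n => Nat.rec V step n
  have hf (n : ℕ) : (∀ i, IsOpen (f n i)) ∧ ⋃ i, f n i = univ := by
    induction n with
    | zero => exact ⟨hVo, hV⟩
    | succ n ih => exact ⟨(hstep n _ ih).1.isOpen, (hstep n _ ih).1.iUnion_eq⟩
  exact ⟨f, rfl, fun n => hstep n (f n) (hf n)⟩

section Exhaustion

variable {C : ℕ → Set X} (hsub : ∀ i, C i ⊆ interior (C (i + 1)))
include hsub

theorem notMem_closure_diff_of_mem_interior {i j : ℕ} (hji : j ≤ i) {x : X}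
    (hx : x ∈ interior (C j)) : x ∉ closure (C (i + 1) \ C i) := by
  have hmono : Monotone C := monotone_nat_of_le_succ fun i => (hsub i).trans interior_subset
  have hdisj : Disjoint (interior (C i)) (C (i + 1) \ C i) :=
    disjoint_left.2 fun y hy hy' => hy'.2 (interior_subset hy)
  exact disjoint_left.1 (hdisj.closure_right isOpen_interior) (interior_mono (hmono hji) hx)

theorem mem_iff_of_mem_interior {f : ℕ → ι → Set X} (hanti : ∀ n i, f (n + 1) i ⊆ f n i)
    (hstab : ∀ n i, f n i \ closure (C (n + 1) \ C n) ⊆ f (n + 1) i) {i : ι} {j n : ℕ}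
    (hjn : j ≤ n) {x : X} (hx : x ∈ interior (C j)) : x ∈ f n i ↔ x ∈ f j i := by
  induction n, hjn using Nat.le_induction with
  | base => rfl
  | succ n hjn ih =>
    exact ⟨fun h => ih.1 (hanti n i h),
      fun h => hstab n i ⟨ih.2 h, notMem_closure_diff_of_mem_interior hsub hjn hx⟩⟩

theorem exists_shrinking_of_exhaustion (h0 : C 0 = ∅) (hcover : ⋃ i, C i = univ) {m : ℕ}
    (hdim : ∀ i, TopDimLE (closure (C (i + 1) \ C i)) m) {V : ι → Set X}
    (hVo : ∀ i, IsOpen (V i)) (hV : ⋃ i, V i = univ) :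
    ∃ W, IsShrinking W V ∧ OrderLEOn W univ m := by
  obtain ⟨f, rfl, hf⟩ := exists_shrinking_seq (fun _ => isClosed_closure) hdim hVo hV
  have hopen : ∀ n i, IsOpen (f n i)
    | 0, i => hVo i
    | n + 1, i => (hf n).1.isOpen i
  have hanti : ∀ i, Antitone (f · i) := fun i => antitone_nat_of_succ_le fun n => (hf n).1.subset i
  have hstable {i j n} (hjn : j ≤ n) {x} (hx : x ∈ interior (C j)) :=
    mem_iff_of_mem_interior hsub (fun n => (hf n).1.subset) (fun n => (hf n).2.1) (i := i) hjn hx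
  let W i := ⋃ j, f j i ∩ interior (C j)
  have hmemW {i j x} (hx : x ∈ interior (C j)) : x ∈ W i ↔ x ∈ f j i := by
    refine ⟨fun h => ?_, fun h => mem_iUnion.2 ⟨j, h, hx⟩⟩
    obtain ⟨k, hk, hxk⟩ := mem_iUnion.1 h
    exact (hstable (le_max_left j k) hx).1 ((hstable (le_max_right j k) hxk).2 hk)
  refine ⟨W, ⟨fun i => isOpen_iUnion fun j => (hopen j i).inter isOpen_interior, ?_,
    fun i => iUnion_subset fun j => inter_subset_left.trans (hanti i (Nat.zero_le j))⟩, ?_⟩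
  · refine eq_univ_of_forall fun x => ?_
    obtain ⟨k, hk, -⟩ := exists_mem_succ_diff h0 hcover x
    obtain ⟨i, hi⟩ := mem_iUnion.1 ((hf (k + 1)).1.iUnion_eq ▸ mem_univ x)
    exact mem_iUnion.2 ⟨i, (hmemW (hsub _ hk)).2 hi⟩
  · intro x _ T hT
    obtain ⟨k, hk⟩ := exists_mem_succ_diff h0 hcover x
    refine (hf k).2.2 x (subset_closure hk) T fun i hi => ?_
    exact hanti i (k + 1).le_succ ((hmemW (hsub _ hk.1)).1 (hT i hi))

end Exhaustion

theorem statement8_general (X : Type) [TopologicalSpace X] (C : ℕ → Set X)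
    (h0 : C 0 = ∅)
    (hsub : ∀ i, C i ⊆ interior (C (i + 1)))
    (hcover : ⋃ i, C i = Set.univ) (d : ℕ)
    (hdim : ∀ i, TopDimLE ↥(closure (C (i + 1) \ C i)) d) :
    FiniteDim X ∧ topDim X ≤ d := by
  have h : TopDimLE X d := topDimLE_of_forall_exists_shrinking fun _ _ hVo hV =>
    exists_shrinking_of_exhaustion hsub h0 hcover hdim hVo hV
  exact ⟨⟨d, h⟩, Nat.sInf_le h⟩

/-- If `X = ⋃ᵢ Cᵢ` with each `Cᵢ` closed, `C₀ = ∅`, `Cᵢ ⊆ int C_{i+1}`, and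
`dim (closure (C_{i+1} \\ Cᵢ)) ≤ d` for all `i`, then `X` is finite-dimensional with
`dim X ≤ d`. -/
theorem statement8 (X : Type) [TopologicalSpace X] (C : ℕ → Set X)
    (hclosed : ∀ i, IsClosed (C i)) (h0 : C 0 = ∅)
    (hsub : ∀ i, C i ⊆ interior (C (i + 1)))
    (hcover : ⋃ i, C i = Set.univ) (d : ℕ)
    (hdim : ∀ i, TopDimLE ↥(closure (C (i + 1) \ C i)) d) :
    FiniteDim X ∧ topDim X ≤ d :=
  statement8_general X C h0 hsub hcover d hdim
end
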